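/- For the (v₋,v₊)-gliders automaton F with v₋ < 0 ≤ v₊, for all j ∈ ℤ and all k ≥ 0: F^k(a)_j = +1 if and only if M_a(j - v₊k) < min over {j - v₊k + 1, ..., j - v₋k + 1} of M_a. -/

import Mathlib

open scoped Classical

/-- The (v₋,v₊)-gliders automaton on alphabet {-1,0,+1} ⊆ ℤ. -/
noncomputable def glider (vm vp : ℤ) (a : ℤ → ℤ) : ℤ → ℤ := fun j =>
  if a (j - vp) = 1 ∧ (∀ N : ℤ, N ≤ -vm → 0 ≤ ∑ t ∈ Finset.Icc (-vp + 1) N, a (j + t)) then 1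
  else if a (j - vm) = -1 ∧ (∀ N : ℤ, -vp ≤ N → (∑ t ∈ Finset.Icc N (-vm - 1), a (j + t)) ≤ 0) then -1
  else 0

/-!
If `M` has steps `a` in `{-1, 0, 1}`, the minimum of `M` over the window `[x - v₊, x - v₋]` has
steps `F a`: the two glider conditions say exactly that this minimum goes up, resp. down, when the
window slides by one. Minima over windows compose by adding the window offsets, so the steps of
the minimum of `M` over `[x - v₊k, x - v₋k]` are `F^k a`. Hence `F^k(a)_j = +1` iff that minimum
increases from `j` to `j + 1`, which happens iff `M (j - v₊k)` lies strictly below `M` on the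
window of `j + 1`.
-/

open Finset

lemma sum_Icc_add_left_eq_sub {a M : ℤ → ℤ} (hM : ∀ k, M (k + 1) = M k + a k) (j : ℤ)
    {p q : ℤ} (h : p - 1 ≤ q) : ∑ t ∈ Icc p q, a (j + t) = M (j + q + 1) - M (j + p) := by
  induction q, h using Int.leInduction with
  | base => simp [add_assoc]
  | succ q hq ih =>
    rw [← insert_Icc_right_eq_Icc_add_one (by omega), sum_insert (by simp), ih, ← add_assoc,
      hM (j + q + 1)]
    ring

/-- The minimum of `M` over the window `[x - r, x - l]` (junk value `0` when `r < l`). -/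
noncomputable def windowMin (l r : ℤ) (M : ℤ → ℤ) (x : ℤ) : ℤ :=
  if h : (Icc (x - r) (x - l)).Nonempty then (Icc (x - r) (x - l)).inf' h M else 0

section windowMin

variable {l r : ℤ} {M : ℤ → ℤ} {x : ℤ}

lemma windowMin_le {b : ℤ} (h₁ : x - r ≤ b) (h₂ : b ≤ x - l) : windowMin l r M x ≤ M b := by
  have hb : b ∈ Icc (x - r) (x - l) := mem_Icc.2 ⟨h₁, h₂⟩
  rw [windowMin, dif_pos ⟨b, hb⟩]
  exact inf'_le M hb

lemma le_windowMin (hlr : l ≤ r) {c : ℤ} (h : ∀ b, x - r ≤ b → b ≤ x - l → c ≤ M b) :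
    c ≤ windowMin l r M x := by
  rw [windowMin, dif_pos (nonempty_Icc.2 (by omega))]
  exact le_inf' _ _ fun b hb => h b (mem_Icc.1 hb).1 (mem_Icc.1 hb).2

lemma exists_windowMin_eq (hlr : l ≤ r) (M : ℤ → ℤ) (x : ℤ) :
    ∃ p, x - r ≤ p ∧ p ≤ x - l ∧ windowMin l r M x = M p := by
  have hne : (Icc (x - r) (x - l)).Nonempty := nonempty_Icc.2 (by omega)
  obtain ⟨p, hp, hpM⟩ := exists_mem_eq_inf' hne M
  rw [windowMin, dif_pos hne]
  exact ⟨p, (mem_Icc.1 hp).1, (mem_Icc.1 hp).2, hpM⟩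

lemma windowMin_self (l : ℤ) (M : ℤ → ℤ) (x : ℤ) : windowMin l l M x = M (x - l) :=
  le_antisymm (windowMin_le le_rfl le_rfl)
    (le_windowMin le_rfl fun _ hb₁ hb₂ => (congrArg M (le_antisymm hb₂ hb₁)).ge)

lemma windowMin_windowMin {l' r' : ℤ} (hlr : l ≤ r) (hlr' : l' ≤ r') :
    windowMin l r (windowMin l' r' M) x = windowMin (l + l') (r + r') M x := by
  apply le_antisymm
  · obtain ⟨p, hp₁, hp₂, hpM⟩ := exists_windowMin_eq (add_le_add hlr hlr') M x
    -- `max (x - r) (p + l')` is a point of the outer window whose inner window contains `p`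
    calc windowMin l r (windowMin l' r' M) x ≤ windowMin l' r' M (max (x - r) (p + l')) :=
          windowMin_le (le_max_left _ _) (max_le (by omega) (by omega))
      _ ≤ M p := windowMin_le (by omega) (by omega)
      _ = _ := hpM.symm
  · exact le_windowMin hlr fun b hb₁ hb₂ =>
      le_windowMin hlr' fun c hc₁ hc₂ => windowMin_le (by omega) (by omega)

lemma windowMin_lt_windowMin_add_one_iff (hlr : l ≤ r) :
    windowMin l r M x < windowMin l r M (x + 1) ↔
      ∀ i ∈ Icc (x - r + 1) (x - l + 1), M (x - r) < M i := by
  constructor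
  · intro hlt i hi
    rw [mem_Icc] at hi
    obtain ⟨p, hp₁, hp₂, hpM⟩ := exists_windowMin_eq hlr M x
    have hp : p = x - r := by
      by_contra hne
      have : windowMin l r M (x + 1) ≤ M p := windowMin_le (by omega) (by omega)
      omega
    have : windowMin l r M (x + 1) ≤ M i := windowMin_le (by omega) (by omega)
    rw [← hp, ← hpM]
    omega
  · intro h
    obtain ⟨q, hq₁, hq₂, hqM⟩ := exists_windowMin_eq hlr M (x + 1)
    have := h q (mem_Icc.2 ⟨by omega, by omega⟩)
    have : windowMin l r M x ≤ M (x - r) := windowMin_le le_rfl (by omega)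
    omega

lemma windowMin_add_one_lt_windowMin_iff (hlr : l ≤ r) :
    windowMin l r M (x + 1) < windowMin l r M x ↔
      ∀ i ∈ Icc (x - r) (x - l), M (x - l + 1) < M i := by
  constructor
  · intro hlt i hi
    rw [mem_Icc] at hi
    obtain ⟨q, hq₁, hq₂, hqM⟩ := exists_windowMin_eq hlr M (x + 1)
    have hq : q = x - l + 1 := by
      by_contra hne
      have : windowMin l r M x ≤ M q := windowMin_le (by omega) (by omega)
      omega
    have : windowMin l r M x ≤ M i := windowMin_le hi.1 hi.2
    rw [← hq, ← hqM]
    omega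
  · intro h
    obtain ⟨p, hp₁, hp₂, hpM⟩ := exists_windowMin_eq hlr M x
    have := h p (mem_Icc.2 ⟨hp₁, hp₂⟩)
    have : windowMin l r M (x + 1) ≤ M (x - l + 1) := windowMin_le (by omega) (by omega)
    omega

lemma abs_windowMin_add_one_sub_le {a : ℤ → ℤ} (hlr : l ≤ r) (hM : ∀ k, M (k + 1) = M k + a k)
    (ha : ∀ k, |a k| ≤ 1) : |windowMin l r M (x + 1) - windowMin l r M x| ≤ 1 := by
  obtain ⟨p, hp₁, hp₂, hpM⟩ := exists_windowMin_eq hlr M x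
  obtain ⟨q, hq₁, hq₂, hqM⟩ := exists_windowMin_eq hlr M (x + 1)
  have hp : windowMin l r M (x + 1) ≤ M (p + 1) := windowMin_le (by omega) (by omega)
  have hq : windowMin l r M x ≤ M (q - 1) := windowMin_le (by omega) (by omega)
  have hMp := hM p
  have hMq : M q = M (q - 1) + a (q - 1) := by rw [← hM, sub_add_cancel]
  have := abs_le.1 (ha p)
  have := abs_le.1 (ha (q - 1))
  rw [abs_le]
  omega

end windowMin

section glider

variable {vm vp : ℤ} {a M : ℤ → ℤ}

lemma glider_plus_condition_iff (hle : vm ≤ vp) (hM : ∀ k, M (k + 1) = M k + a k)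
    (ha : ∀ k, a k ≤ 1) (j : ℤ) :
    (a (j - vp) = 1 ∧ ∀ N : ℤ, N ≤ -vm → 0 ≤ ∑ t ∈ Icc (-vp + 1) N, a (j + t)) ↔
      windowMin vm vp M j < windowMin vm vp M (j + 1) := by
  rw [windowMin_lt_windowMin_add_one_iff hle]
  have hstep := hM (j - vp)
  have hsum : ∀ N, -vp ≤ N →
      ∑ t ∈ Icc (-vp + 1) N, a (j + t) = M (j + N + 1) - M (j - vp + 1) := fun N hN => by
    rw [sum_Icc_add_left_eq_sub hM j (by omega), ← add_assoc, ← sub_eq_add_neg]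
  constructor
  · rintro ⟨hone, hsums⟩ i hi
    rw [mem_Icc] at hi
    have h := hsums (i - j - 1) (by omega)
    rw [hsum _ (by omega), show j + (i - j - 1) + 1 = i by ring] at h
    omega
  · intro h
    have hone : a (j - vp) = 1 := by
      have := h (j - vp + 1) (mem_Icc.2 ⟨le_rfl, by omega⟩)
      have := ha (j - vp)
      omega
    refine ⟨hone, fun N hN => ?_⟩
    rcases le_or_gt (-vp) N with hN' | hN'
    · have := h (j + N + 1) (mem_Icc.2 ⟨by omega, by omega⟩)
      rw [hsum N hN']
      omega
    · rw [Icc_eq_empty (by omega), sum_empty]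

lemma glider_minus_condition_iff (hle : vm ≤ vp) (hM : ∀ k, M (k + 1) = M k + a k)
    (ha : ∀ k, -1 ≤ a k) (j : ℤ) :
    (a (j - vm) = -1 ∧ ∀ N : ℤ, -vp ≤ N → (∑ t ∈ Icc N (-vm - 1), a (j + t)) ≤ 0) ↔
      windowMin vm vp M (j + 1) < windowMin vm vp M j := by
  rw [windowMin_add_one_lt_windowMin_iff hle]
  have hstep := hM (j - vm)
  have hsum : ∀ N, N ≤ -vm →
      ∑ t ∈ Icc N (-vm - 1), a (j + t) = M (j - vm) - M (j + N) := fun N hN => by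
    rw [sum_Icc_add_left_eq_sub hM j (by omega), show j + (-vm - 1) + 1 = j - vm by ring]
  constructor
  · rintro ⟨hone, hsums⟩ i hi
    rw [mem_Icc] at hi
    have h := hsums (i - j) (by omega)
    rw [hsum _ (by omega), show j + (i - j) = i by ring] at h
    omega
  · intro h
    have hone : a (j - vm) = -1 := by
      have := h (j - vm) (mem_Icc.2 ⟨by omega, le_rfl⟩)
      have := ha (j - vm)
      omega
    refine ⟨hone, fun N hN => ?_⟩
    rcases le_or_gt N (-vm) with hN' | hN'
    · have := h (j + N) (mem_Icc.2 ⟨by omega, by omega⟩)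
      rw [hsum N hN']
      omega
    · rw [Icc_eq_empty (by omega), sum_empty]

lemma glider_eq_windowMin_add_one_sub (hle : vm ≤ vp) (hM : ∀ k, M (k + 1) = M k + a k)
    (ha : ∀ k, |a k| ≤ 1) (j : ℤ) :
    glider vm vp a j = windowMin vm vp M (j + 1) - windowMin vm vp M j := by
  have hW := abs_le.1 (abs_windowMin_add_one_sub_le (x := j) hle hM ha)
  unfold glider
  split_ifs with hplus hminus <;>
    simp only [glider_plus_condition_iff hle hM (fun k => (abs_le.1 (ha k)).2),
      glider_minus_condition_iff hle hM (fun k => (abs_le.1 (ha k)).1)] at * <;>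
    omega

lemma iterate_glider_eq_windowMin_add_one_sub (hle : vm ≤ vp) (hM : ∀ k, M (k + 1) = M k + a k)
    (ha : ∀ k, |a k| ≤ 1) (k : ℕ) (x : ℤ) :
    (glider vm vp)^[k] a x =
      windowMin (vm * k) (vp * k) M (x + 1) - windowMin (vm * k) (vp * k) M x := by
  induction k generalizing x with
  | zero => simp [windowMin_self, hM]
  | succ k ih =>
    have hk : vm * k ≤ vp * k := mul_le_mul_of_nonneg_right hle k.cast_nonneg
    rw [Function.iterate_succ_apply', glider_eq_windowMin_add_one_sub hle
      (fun y => by rw [ih]; ring) (fun y => ih y ▸ abs_windowMin_add_one_sub_le hk hM ha),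
      windowMin_windowMin hle hk, windowMin_windowMin hle hk, Nat.cast_succ, mul_add_one vm,
      mul_add_one vp, add_comm (vm * k), add_comm (vp * k)]

end glider

theorem stmt4_general (vm vp : ℤ) (hvm : vm < 0) (hvp : 0 ≤ vp)
    (a : ℤ → ℤ) (ha : ∀ k, a k = -1 ∨ a k = 0 ∨ a k = 1)
    (M : ℤ → ℤ) (hM : ∀ k, M (k + 1) = M k + a k)
    (j : ℤ) (k : ℕ) :
    (glider vm vp)^[k] a j = 1 ↔
      ∀ i ∈ Finset.Icc (j - vp * k + 1) (j - vm * k + 1), M (j - vp * k) < M i := by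
  have hle : vm ≤ vp := by omega
  have hk : vm * k ≤ vp * k := mul_le_mul_of_nonneg_right hle k.cast_nonneg
  have ha' : ∀ i, |a i| ≤ 1 := fun i => by rcases ha i with h | h | h <;> simp [h]
  have hW := abs_le.1 (abs_windowMin_add_one_sub_le (x := j) hk hM ha')
  rw [iterate_glider_eq_windowMin_add_one_sub hle hM ha', ← windowMin_lt_windowMin_add_one_iff hk]
  omega

theorem stmt4 (vm vp : ℤ) (hvm : vm < 0) (hvp : 0 ≤ vp)
    (a : ℤ → ℤ) (ha : ∀ k, a k = -1 ∨ a k = 0 ∨ a k = 1)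
    (M : ℤ → ℤ) (hM0 : M 0 = 0) (hM : ∀ k, M (k + 1) = M k + a k)
    (j : ℤ) (k : ℕ) :
    (glider vm vp)^[k] a j = 1 ↔
      ∀ i ∈ Finset.Icc (j - vp * k + 1) (j - vm * k + 1), M (j - vp * k) < M i :=
  stmt4_general vm vp hvm hvp a ha M hM j k
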